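/- arXiv:0806.1118 — 2 statements merged into one kernel-verified Lean document; each statement's English description precedes it below -/
import Mathlib

section
/- In the braid group B_{n+1}, for any i with 1 ≤ i ≤ n−1, any l ≥ 2 and any j ≤ i, the relation a_{i+1} a_i^l a_{i+1} a_i = a_i a_{i+1} a_i^2 a_{i+1}^{l-1} holds. -/
theorem semiconjBy_mul_of_braid {G : Type*} [Monoid G] {a b : G} (h : b * a * b = a * b * a) :
    SemiconjBy (b * a) b a := by
  simp only [SemiconjBy, h, mul_assoc]

theorem braid_mul_pow_succ {G : Type*} [Monoid G] {a b : G} (h : b * a * b = a * b * a)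
    (k : ℕ) : b * a ^ (k + 1) * b * a = a * b * a ^ 2 * b ^ k := by
  have hpow : (b * a) * b ^ (k + 1) = a ^ (k + 1) * (b * a) :=
    (semiconjBy_mul_of_braid h).pow_right (k + 1)
  calc b * a ^ (k + 1) * b * a
      = b * (a ^ (k + 1) * (b * a)) := by simp only [mul_assoc]
    _ = b * (b * a * b) * b ^ k := by rw [← hpow, pow_succ']; simp only [mul_assoc]
    _ = b * (a * b * a) * b ^ k := by rw [h]
    _ = (b * a * b) * a * b ^ k := by simp only [mul_assoc]
    _ = a * b * a ^ 2 * b ^ k := by rw [h, sq]; simp only [mul_assoc]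

theorem braid_power_relation_general {G : Type*} [Group G] (n : ℕ) (a : ℕ → G)
    (hbraid : ∀ i, 1 ≤ i → i + 1 ≤ n → a (i + 1) * a i * a (i + 1) = a i * a (i + 1) * a i)
    (i l : ℕ) (hi : 1 ≤ i) (hin : i + 1 ≤ n) (hl : 2 ≤ l) :
    a (i + 1) * a i ^ l * a (i + 1) * a i
      = a i * a (i + 1) * a i ^ 2 * a (i + 1) ^ (l - 1) := by
  obtain ⟨k, rfl⟩ : ∃ k, l = k + 1 := ⟨l - 1, by omega⟩
  exact braid_mul_pow_succ (hbraid i hi hin) k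

/-- In B_{n+1}, for 1 ≤ i ≤ n-1 and l ≥ 2:
a_{i+1} a_i^l a_{i+1} a_i = a_i a_{i+1} a_i² a_{i+1}^(l-1). -/
theorem braid_power_relation {G : Type*} [Group G] (n : ℕ) (a : ℕ → G)
    (hbraid : ∀ i, 1 ≤ i → i + 1 ≤ n → a (i + 1) * a i * a (i + 1) = a i * a (i + 1) * a i)
    (hcomm : ∀ i j, 1 ≤ j → j + 2 ≤ i → i ≤ n → a i * a j = a j * a i)
    (i l : ℕ) (hi : 1 ≤ i) (hin : i + 1 ≤ n) (hl : 2 ≤ l) :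
    a (i + 1) * a i ^ l * a (i + 1) * a i
      = a i * a (i + 1) * a i ^ 2 * a (i + 1) ^ (l - 1) :=
  braid_power_relation_general n a hbraid i l hi hin hl
end

section
/- In the braid monoid B_{n+1}^+ (positive braids), for j ≤ i+1 and any exponent vector p = (p_0, …, p_{i-j+1}) of positive integers, the relation a_i^{p_0} a_{i-1}^{p_1} ⋯ a_{j-1}^{p_{i-j+1}} · (a_{i+1} a_i ⋯ a_{j-1}) = (a_{i+1} a_i ⋯ a_{j-1}) · a_{i+1}^{p_0} a_i^{p_1} ⋯ a_j^{p_{i-j+1}} holds. -/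
/-! Conjugating by `Δ = a_{i+1} a_i ⋯ a_j` shifts every generator `a_m` with `j ≤ m ≤ i` up to
`a_{m+1}`: write `Δ = (a_{i+1} ⋯ a_{m+2}) (a_{m+1} a_m) (a_{m-1} ⋯ a_j)`; the outer factors commute
with `a_m` resp. `a_{m+1}`, and on the middle factor the shift is exactly the braid relation. The
shift then passes through any product of powers of such generators. -/

/-- The descending product a_i a_{i-1} ⋯ a_j (equal to 1 if i < j). -/
def descProd {M : Type*} [Monoid M] (a : ℕ → M) (i j : ℕ) : M :=
  (((List.range' j (i + 1 - j)).reverse).map a).prod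

/-- The descending product with exponents: a_i^{p₀} a_{i-1}^{p₁} ⋯ a_j^{p_{i-j}}. -/
def descPow {M : Type*} [Monoid M] (a : ℕ → M) (p : ℕ → ℕ) (i j : ℕ) : M :=
  (((List.range' j (i + 1 - j)).reverse).map (fun m => a m ^ p (i - m))).prod

theorem SemiconjBy.list_prod_map {M ι : Type*} [Monoid M] {c : M} {f g : ι → M} {l : List ι}
    (h : ∀ x ∈ l, SemiconjBy c (f x) (g x)) :
    SemiconjBy c (l.map f).prod (l.map g).prod := by
  induction l with
  | nil => exact SemiconjBy.one_right c
  | cons x l ih =>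
    simp only [List.map_cons, List.prod_cons]
    exact (h x List.mem_cons_self).mul_right (ih fun y hy => h y (List.mem_cons_of_mem x hy))

section DescProd

variable {M : Type*} [Monoid M] (a : ℕ → M)

theorem descProd_self (i : ℕ) : descProd a i i = a i := by
  simp [descProd]

theorem descProd_eq_mul {i j : ℕ} (k : ℕ) (hjk : j ≤ k + 1) (hki : k ≤ i) :
    descProd a i j = descProd a i (k + 1) * descProd a k j := by
  have hsplit : List.range' j (k + 1 - j) ++ List.range' (k + 1) (i - k) =
      List.range' j (i + 1 - j) := by
    have := List.range'_append_1 (s := j) (m := k + 1 - j) (n := i - k)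
    rwa [show j + (k + 1 - j) = k + 1 by omega, show k + 1 - j + (i - k) = i + 1 - j by omega]
      at this
  rw [descProd, descProd, descProd, ← hsplit, List.reverse_append, List.map_append,
    List.prod_append, show i + 1 - (k + 1) = i - k by omega]

theorem descProd_succ {i j : ℕ} (h : j ≤ i + 1) :
    descProd a (i + 1) j = a (i + 1) * descProd a i j := by
  rw [descProd_eq_mul a i h le_self_add, descProd_self]

theorem Commute.descProd_right {x : M} {i j : ℕ} (h : ∀ k, j ≤ k → k ≤ i → Commute x (a k)) :
    Commute x (descProd a i j) := by
  refine Commute.list_prod_right _ _ fun y hy => ?_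
  obtain ⟨k, hk, rfl⟩ := List.mem_map.1 hy
  rw [List.mem_reverse, List.mem_range'_1] at hk
  exact h k hk.1 (by omega)

theorem semiconjBy_descProd_generator (n : ℕ)
    (hbraid : ∀ i, 1 ≤ i → i + 1 ≤ n → a (i + 1) * a i * a (i + 1) = a i * a (i + 1) * a i)
    (hcomm : ∀ i j, 1 ≤ j → j + 2 ≤ i → i ≤ n → a i * a j = a j * a i)
    {i j m : ℕ} (hj : 1 ≤ j) (hjm : j ≤ m) (hmi : m ≤ i) (hin : i + 1 ≤ n) :
    SemiconjBy (descProd a (i + 1) j) (a (m + 1)) (a m) := by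
  obtain ⟨k, rfl⟩ : ∃ k, m = k + 1 := ⟨m - 1, by omega⟩
  have hdecomp : descProd a (i + 1) j =
      descProd a (i + 1) (k + 3) * (a (k + 2) * a (k + 1)) * descProd a k j := by
    rw [descProd_eq_mul a (k + 2) (by omega) (by omega), descProd_succ a (i := k + 1) (by omega),
      descProd_succ a (i := k) (by omega)]
    simp only [mul_assoc]
  have hhigh : Commute (a (k + 1)) (descProd a (i + 1) (k + 3)) :=
    Commute.descProd_right a fun l hl _ => (hcomm l (k + 1) (by omega) hl (by omega)).symm
  have hlow : Commute (a (k + 2)) (descProd a k j) :=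
    Commute.descProd_right a fun l hl _ => hcomm (k + 2) l (by omega) (by omega) (by omega)
  have hmid : SemiconjBy (a (k + 2) * a (k + 1)) (a (k + 2)) (a (k + 1)) := by
    simpa only [SemiconjBy, mul_assoc] using hbraid (k + 1) (by omega) (by omega)
  rw [hdecomp]
  exact (SemiconjBy.mul_left hhigh.symm hmid).mul_left hlow.symm

theorem descPow_succ_index (p : ℕ → ℕ) (i j : ℕ) :
    descPow (fun m => a (m + 1)) p i j = descPow a p (i + 1) (j + 1) := by
  rw [descPow, descPow, show i + 1 + 1 - (j + 1) = i + 1 - j by omega, List.range'_succ_left,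
    ← List.map_reverse, List.map_map]
  refine congrArg List.prod (List.map_congr_left fun m _ => ?_)
  simp only [Function.comp_apply, Nat.add_sub_add_right]

theorem semiconjBy_descPow {c : M} {b : ℕ → M} {i j : ℕ} (p : ℕ → ℕ)
    (h : ∀ m, j ≤ m → m ≤ i → SemiconjBy c (b m) (a m)) :
    SemiconjBy c (descPow b p i j) (descPow a p i j) := by
  refine SemiconjBy.list_prod_map fun m hm => (h m ?_ ?_).pow_right _ <;>
    rw [List.mem_reverse, List.mem_range'_1] at hm <;> omega

end DescProd

theorem braid_monoid_desc_pow_shift_general {M : Type*} [Monoid M] (n : ℕ) (a : ℕ → M)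
    (hbraid : ∀ i, 1 ≤ i → i + 1 ≤ n → a (i + 1) * a i * a (i + 1) = a i * a (i + 1) * a i)
    (hcomm : ∀ i j, 1 ≤ j → j + 2 ≤ i → i ≤ n → a i * a j = a j * a i)
    (i j : ℕ) (p : ℕ → ℕ)
    (hj : 2 ≤ j) (hin : i + 1 ≤ n) :
    descPow a p i (j - 1) * descProd a (i + 1) (j - 1)
      = descProd a (i + 1) (j - 1) * descPow a p (i + 1) j := by
  obtain ⟨k, rfl⟩ : ∃ k, j = k + 1 := ⟨j - 1, by omega⟩
  rw [Nat.add_sub_cancel, ← descPow_succ_index]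
  exact (semiconjBy_descPow a p fun m hkm hmi =>
    semiconjBy_descProd_generator a n hbraid hcomm (by omega) hkm hmi hin).eq.symm

/-- In the braid monoid B_{n+1}⁺, for 2 ≤ j ≤ i+1 ≤ n and positive exponents p:
a_i^{p₀} ⋯ a_{j-1}^{p_{i-j+1}} · a_{i+1,j-1} = a_{i+1,j-1} · a_{i+1}^{p₀} ⋯ a_j^{p_{i-j+1}}. -/
theorem braid_monoid_desc_pow_shift {M : Type*} [Monoid M] (n : ℕ) (a : ℕ → M)
    (hbraid : ∀ i, 1 ≤ i → i + 1 ≤ n → a (i + 1) * a i * a (i + 1) = a i * a (i + 1) * a i)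
    (hcomm : ∀ i j, 1 ≤ j → j + 2 ≤ i → i ≤ n → a i * a j = a j * a i)
    (i j : ℕ) (p : ℕ → ℕ) (hp : ∀ t, t ≤ i - j + 1 → 1 ≤ p t)
    (hj : 2 ≤ j) (hji : j ≤ i + 1) (hin : i + 1 ≤ n) :
    descPow a p i (j - 1) * descProd a (i + 1) (j - 1)
      = descProd a (i + 1) (j - 1) * descPow a p (i + 1) j :=
  braid_monoid_desc_pow_shift_general n a hbraid hcomm i j p hj hin
end
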